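/- arXiv:2412.02580 — 5 statements merged into one kernel-verified Lean document; each statement's English description precedes it below -/
import Mathlib

section
/- In a tree, the distance to a fixed vertex is convex along paths: let G be a tree (finite, connected, acyclic simple graph) with graph distance dist. For any vertices p, u, v, w such that v lies on the path from u to w (i.e., dist(u,w) = dist(u,v) + dist(v,w)), one has dist(p,v)·dist(u,w) ≤ dist(v,w)·dist(p,u) + dist(u,v)·dist(p,w). -/
/-- If `v` is on the support of a walk from `a` to `b`, then
`dist a v + dist v b ≤ length`. -/
private lemma dist_split_of_mem_support {V : Type*} {G : SimpleGraph V} {a b v : V}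
    (P : G.Walk a b) (hv : v ∈ P.support) :
    G.dist a v + G.dist v b ≤ P.length := by
  classical
  have hspec := P.take_spec hv
  have hlen : (P.takeUntil v hv).length + (P.dropUntil v hv).length = P.length := by
    rw [← SimpleGraph.Walk.length_append, hspec]
  calc G.dist a v + G.dist v b
      ≤ (P.takeUntil v hv).length + (P.dropUntil v hv).length :=
        Nat.add_le_add (SimpleGraph.dist_le _) (SimpleGraph.dist_le _)
    _ = P.length := hlen

/-- In a tree, `v` on the path between `u` and `w` lies on the path from any `p`
to `u` or to `w`. -/
private lemma tree_key {V : Type*} {G : SimpleGraph V} (hT : G.IsTree) (p u v w : V)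
    (hv : G.dist u w = G.dist u v + G.dist v w) :
    G.dist p v + G.dist v u ≤ G.dist p u ∨ G.dist p v + G.dist v w ≤ G.dist p w := by
  classical
  have hc := hT.isConnected
  have hac := hT.IsAcyclic
  obtain ⟨P, hP, hPl⟩ := hc.exists_path_of_dist p u
  obtain ⟨Q, hQ, hQl⟩ := hc.exists_path_of_dist p w
  obtain ⟨S, hS, hSl⟩ := hc.exists_path_of_dist u v
  obtain ⟨T, hT', hTl⟩ := hc.exists_path_of_dist v w
  -- The walk S ++ T has length dist u w, so it's a path containing v.
  have hW : (S.append T).length = G.dist u w := by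
    rw [SimpleGraph.Walk.length_append, hSl, hTl, hv]
  have hWpath : (S.append T).IsPath := (S.append T).isPath_of_length_eq_dist hW
  -- The walk P.reverse ++ Q is a walk from u to w; its toPath is a path.
  set W2 := (P.reverse.append Q) with hW2
  have hW2path : W2.toPath.val.IsPath := W2.toPath.prop
  -- By uniqueness of paths in a tree, S.append T = W2.toPath.
  have huniq := SimpleGraph.isAcyclic_iff_path_unique.mp hac
    (⟨S.append T, hWpath⟩ : G.Path u w) W2.toPath
  have hvmem : v ∈ W2.toPath.val.support := by
    have : v ∈ (S.append T).support := by
      rw [SimpleGraph.Walk.support_append]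
      exact List.mem_append_left _ S.end_mem_support
    have heq : (⟨S.append T, hWpath⟩ : G.Path u w).val = W2.toPath.val := by
      rw [huniq]
    rwa [← heq]
  have hvmem2 : v ∈ W2.support := W2.support_toPath_subset hvmem
  rw [hW2, SimpleGraph.Walk.mem_support_append_iff] at hvmem2
  rcases hvmem2 with h | h
  · left
    rw [SimpleGraph.Walk.support_reverse, List.mem_reverse] at h
    have := dist_split_of_mem_support P h
    rw [hPl] at this
    have hsym : G.dist v p = G.dist p v := SimpleGraph.dist_comm ..
    omega
  · right
    have := dist_split_of_mem_support Q h
    rw [hQl] at this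
    omega

/-- In a tree, the graph distance to a fixed vertex `p` is convex along paths:
if `v` lies on the path from `u` to `w`, then
`dist p v * dist u w ≤ dist v w * dist p u + dist u v * dist p w`. -/
theorem tree_dist_convex_along_path {V : Type*} [Fintype V] (G : SimpleGraph V)
    (hT : G.IsTree) (p u v w : V)
    (hv : G.dist u w = G.dist u v + G.dist v w) :
    G.dist p v * G.dist u w ≤ G.dist v w * G.dist p u + G.dist u v * G.dist p w := by
  have hc := hT.isConnected
  have t1 : G.dist p v ≤ G.dist p u + G.dist u v := hc.dist_triangle
  have t2 : G.dist p v ≤ G.dist p w + G.dist w v := hc.dist_triangle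
  have s1 : G.dist w v = G.dist v w := SimpleGraph.dist_comm ..
  have s2 : G.dist v u = G.dist u v := SimpleGraph.dist_comm ..
  rcases tree_key hT p u v w hv with h | h
  · rw [s2] at h
    nlinarith [h, t2, s1, hv]
  · nlinarith [h, t1, hv]
end

section
/- The expected distance of an uncertain point is convex along any path of a tree: let G be a tree with graph distance dist, and let P be an uncertain point with locations p_1,…,p_m ∈ V and probabilities f_1,…,f_m, with expected distance D(v) = Σ_j f_j·dist(p_j, v). For any vertices u, v, w such that v lies on the path from u to w (i.e., dist(u,w) = dist(u,v) + dist(v,w)), one has D(v)·dist(u,w) ≤ dist(v,w)·D(u) + dist(u,v)·D(w). -/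
/-!
Fix a vertex `x`. Since `v` lies on the path from `u` to `w`, the first edges of the paths from
`v` to `u` and from `v` to `w` differ, so the last edge of the path from `x` to `v` differs from
one of them. In a tree a walk whose consecutive edges differ is a path, so `v` lies on the path
from `x` to `u` or on the path from `x` to `w`. Together with the triangle inequality this gives
`dist(x, v) · dist(u, w) ≤ dist(v, w) · dist(x, u) + dist(u, v) · dist(x, w)`, and the theorem is
the average of these inequalities with the weights `f`.
-/

namespace SimpleGraph

variable {V : Type*} {G : SimpleGraph V}

/-- `v` lies on a shortest path from `u` to `w`. -/
def IsBetween (G : SimpleGraph V) (u v w : V) : Prop :=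
  G.dist u w = G.dist u v + G.dist v w

lemma IsAcyclic.length_eq_dist_of_isPath (hG : G.IsAcyclic) {a b : V} {p : G.Walk a b}
    (hp : p.IsPath) : p.length = G.dist a b := by
  obtain ⟨q, hq, hq_len⟩ := p.reachable.exists_path_of_dist
  rw [← hq_len, Subtype.mk.inj <| (hG.subsingleton_path a b).elim ⟨p, hp⟩ ⟨q, hq⟩]

lemma IsAcyclic.isPath_append_iff (hG : G.IsAcyclic) {a b c : V} {p : G.Walk a b}
    {q : G.Walk b c} (hp : p.IsPath) (hq : q.IsPath) :
    (p.append q).IsPath ↔ ∀ e ∈ p.edges.getLast?, ∀ e' ∈ q.edges.head?, e ≠ e' := by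
  rw [hG.isPath_iff_isChain, Walk.edges_append, List.isChain_append,
    ← hG.isPath_iff_isChain, ← hG.isPath_iff_isChain]
  simp only [hp, hq, true_and]

lemma IsTree.isBetween_or_isBetween (hG : G.IsTree) {u v w : V} (h : G.IsBetween u v w)
    (x : V) : G.IsBetween x v u ∨ G.IsBetween x v w := by
  obtain ⟨pu, hpu, hpu_len⟩ := hG.connected.exists_path_of_dist v u
  obtain ⟨pw, hpw, hpw_len⟩ := hG.connected.exists_path_of_dist v w
  obtain ⟨q, hq, hq_len⟩ := hG.connected.exists_path_of_dist x v
  have hupw : (pu.reverse.append pw).IsPath := by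
    apply Walk.isPath_of_length_eq_dist
    rw [Walk.length_append, Walk.length_reverse, hpu_len, hpw_len, dist_comm, h]
  have first_edges_ne : ∀ e ∈ pu.edges.head?, ∀ e' ∈ pw.edges.head?, e ≠ e' := by
    simpa [Walk.edges_reverse] using (hG.isAcyclic.isPath_append_iff hpu.reverse hpw).1 hupw
  have isBetween_of_isPath {y : V} {p : G.Walk v y} (hp : (q.append p).IsPath)
      (hp_len : p.length = G.dist v y) : G.IsBetween x v y := by
    rw [IsBetween, ← hG.isAcyclic.length_eq_dist_of_isPath hp, Walk.length_append, hq_len,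
      hp_len]
  by_cases hqu : (q.append pu).IsPath
  · exact .inl (isBetween_of_isPath hqu hpu_len)
  by_cases hqw : (q.append pw).IsPath
  · exact .inr (isBetween_of_isPath hqw hpw_len)
  simp only [hG.isAcyclic.isPath_append_iff hq hpu, hG.isAcyclic.isPath_append_iff hq hpw,
    not_forall, not_not, exists_prop] at hqu hqw
  obtain ⟨e, he, e₁, he₁, rfl⟩ := hqu
  obtain ⟨e', he', e₂, he₂, rfl⟩ := hqw
  exact (first_edges_ne e he₁ e' he₂ (Option.mem_unique he he')).elim

lemma IsTree.dist_mul_dist_le (hG : G.IsTree) {u v w : V} (h : G.IsBetween u v w) (x : V) :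
    G.dist x v * G.dist u w ≤ G.dist v w * G.dist x u + G.dist u v * G.dist x w := by
  have hvu : G.dist v u = G.dist u v := dist_comm
  have hwv : G.dist w v = G.dist v w := dist_comm
  rcases hG.isBetween_or_isBetween h x with hx | hx <;> unfold IsBetween at h hx
  · have := hG.connected.dist_triangle (u := x) (v := w) (w := v)
    nlinarith
  · have := hG.connected.dist_triangle (u := x) (v := u) (w := v)
    nlinarith

end SimpleGraph

theorem expectedDist_convex_along_path_general {V : Type*} (G : SimpleGraph V)
    (hT : G.IsTree) {m : ℕ} (p : Fin m → V) (f : Fin m → ℝ)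
    (hf : ∀ j, 0 ≤ f j)
    (u v w : V) (hv : G.dist u w = G.dist u v + G.dist v w) :
    (∑ j, f j * (G.dist (p j) v : ℝ)) * (G.dist u w : ℝ) ≤
      (G.dist v w : ℝ) * (∑ j, f j * (G.dist (p j) u : ℝ)) +
        (G.dist u v : ℝ) * (∑ j, f j * (G.dist (p j) w : ℝ)) := by
  have pointwise (x : V) : (G.dist x v : ℝ) * G.dist u w ≤
      G.dist v w * G.dist x u + G.dist u v * G.dist x w := by
    exact_mod_cast hT.dist_mul_dist_le hv x
  calc (∑ j, f j * (G.dist (p j) v : ℝ)) * (G.dist u w : ℝ)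
      = ∑ j, f j * (G.dist (p j) v * G.dist u w : ℝ) := by
        rw [Finset.sum_mul]
        simp only [mul_assoc]
    _ ≤ ∑ j, f j * (G.dist v w * G.dist (p j) u + G.dist u v * G.dist (p j) w : ℝ) :=
        Finset.sum_le_sum fun j _ ↦ mul_le_mul_of_nonneg_left (pointwise (p j)) (hf j)
    _ = _ := by
        simp only [Finset.mul_sum, ← Finset.sum_add_distrib]
        exact Finset.sum_congr rfl fun j _ ↦ by ring

/-- The expected distance of an uncertain point is convex along any path of a tree. -/
theorem expectedDist_convex_along_path {V : Type*} [Fintype V] (G : SimpleGraph V)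
    (hT : G.IsTree) {m : ℕ} (p : Fin m → V) (f : Fin m → ℝ)
    (hf : ∀ j, 0 ≤ f j) (hsum : ∑ j, f j = 1)
    (u v w : V) (hv : G.dist u w = G.dist u v + G.dist v w) :
    (∑ j, f j * (G.dist (p j) v : ℝ)) * (G.dist u w : ℝ) ≤
      (G.dist v w : ℝ) * (∑ j, f j * (G.dist (p j) u : ℝ)) +
        (G.dist u v : ℝ) * (∑ j, f j * (G.dist (p j) w : ℝ)) :=
  expectedDist_convex_along_path_general G hT p f hf u v w hv
end

section
/- If x is a vertex of a tree G such that for every connected component C of the subgraph of G induced on V \ {x}, the total probability of the locations of an uncertain point P lying in C is at most 1/2, then x minimizes the expected distance D(v) = Σ_j f_j·dist(p_j, v), i.e., x is a median of P. (Lemma 1, parts 2 and 3.) -/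
private lemma reachable_induce_of_walk {V : Type*} {G : SimpleGraph V} {s : Set V} :
    ∀ {a b : V} (w : G.Walk a b) (hs : ∀ y ∈ w.support, y ∈ s),
      (G.induce s).Reachable ⟨a, hs a w.start_mem_support⟩ ⟨b, hs b w.end_mem_support⟩ := by
  intro a b w
  induction w with
  | nil => exact fun hs => SimpleGraph.Reachable.refl _
  | @cons a c b h w ih =>
    intro hs
    have hadj : (G.induce s).Adj ⟨a, hs a (by simp)⟩ ⟨c, hs c (by simp)⟩ := h
    exact hadj.reachable.trans (ih fun y hy => hs y (by simp [hy]))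

open Classical in
private lemma dist_add_of_not_mem {V : Type*} {G : SimpleGraph V}
    (hc : G.Connected) {x v : V} (hv : v ≠ x) (q : V)
    (hq : q ∉ Subtype.val ''
      ((G.induce {u | u ≠ x}).connectedComponentMk ⟨v, hv⟩).supp) :
    G.dist q x + G.dist x v ≤ G.dist q v := by
  classical
  obtain ⟨w, hwlen⟩ := (hc q v).exists_walk_length_eq_dist
  by_cases hx : x ∈ w.support
  · have h1 : G.dist q x ≤ (w.takeUntil x hx).length := SimpleGraph.dist_le _
    have h2 : G.dist x v ≤ (w.dropUntil x hx).length := SimpleGraph.dist_le _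
    have h3 := congrArg SimpleGraph.Walk.length (w.take_spec hx)
    rw [SimpleGraph.Walk.length_append] at h3
    omega
  · exfalso
    have hs : ∀ y ∈ w.support, y ∈ {u | u ≠ x} := fun y hy h => hx (h ▸ hy)
    have hr := reachable_induce_of_walk w hs
    exact hq ⟨⟨q, hs q w.start_mem_support⟩,
      (SimpleGraph.ConnectedComponent.mem_supp_iff _ _).mpr
        (SimpleGraph.ConnectedComponent.sound hr), rfl⟩

open Classical in
/-- Lemma 1, parts 2 and 3: if every split subtree of `x` holds probability sum of the
uncertain point at most `1/2`, then `x` is a median of the uncertain point. -/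
theorem median_of_no_heavy_split_subtree {V : Type*} [Fintype V] (G : SimpleGraph V)
    (hT : G.IsTree) {m : ℕ} (p : Fin m → V) (f : Fin m → ℝ)
    (hf : ∀ j, 0 ≤ f j) (hsum : ∑ j, f j = 1) (x : V)
    (hlight : ∀ C : (G.induce {v | v ≠ x}).ConnectedComponent,
      (∑ j, if p j ∈ Subtype.val '' C.supp then f j else 0) ≤ (1 : ℝ) / 2) :
    ∀ v : V, ∑ j, f j * (G.dist (p j) x : ℝ) ≤ ∑ j, f j * (G.dist (p j) v : ℝ) := by
  intro v
  by_cases hvx : v = x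
  · subst hvx; exact le_refl _
  have hc := hT.isConnected
  set C := (G.induce {u | u ≠ x}).connectedComponentMk ⟨v, hvx⟩ with hC
  have key : ∀ j, f j * (G.dist (p j) x : ℝ) ≤
      f j * (G.dist (p j) v : ℝ) + (G.dist x v : ℝ) *
        (2 * (if p j ∈ Subtype.val '' C.supp then f j else 0) - f j) := by
    intro j
    by_cases hj : p j ∈ Subtype.val '' C.supp
    · rw [if_pos hj]
      have ht : G.dist (p j) x ≤ G.dist (p j) v + G.dist v x := hc.dist_triangle
      rw [show G.dist v x = G.dist x v from SimpleGraph.dist_comm] at ht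
      have ht' : (G.dist (p j) x : ℝ) ≤ (G.dist (p j) v : ℝ) + (G.dist x v : ℝ) := by
        exact_mod_cast ht
      nlinarith [hf j]
    · rw [if_neg hj]
      have ht := dist_add_of_not_mem hc hvx (p j) hj
      have ht' : (G.dist (p j) x : ℝ) + (G.dist x v : ℝ) ≤ (G.dist (p j) v : ℝ) := by
        exact_mod_cast ht
      nlinarith [hf j]
  calc ∑ j, f j * (G.dist (p j) x : ℝ)
      ≤ ∑ j, (f j * (G.dist (p j) v : ℝ) + (G.dist x v : ℝ) *
          (2 * (if p j ∈ Subtype.val '' C.supp then f j else 0) - f j)) :=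
        Finset.sum_le_sum fun j _ => key j
    _ = (∑ j, f j * (G.dist (p j) v : ℝ)) + (G.dist x v : ℝ) *
          (2 * (∑ j, if p j ∈ Subtype.val '' C.supp then f j else 0) - ∑ j, f j) := by
        rw [Finset.sum_add_distrib, ← Finset.mul_sum, Finset.sum_sub_distrib,
          ← Finset.mul_sum]
    _ ≤ ∑ j, f j * (G.dist (p j) v : ℝ) := by
        have h1 := hlight C
        have h2 : (0:ℝ) ≤ (G.dist x v : ℝ) := Nat.cast_nonneg _
        nlinarith
end

section
/- The set of medians of an uncertain point on a tree induces a connected subtree: let G be a tree and P an uncertain point with expected distance D. Then the subgraph of G induced on the set M = {v ∈ V : D(v) ≤ D(u) for all u ∈ V} of minimizers of D is connected. -/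
open SimpleGraph

lemma getVert_ne_of_isPath {V : Type*} {G : SimpleGraph V} {u v : V}
    (W : G.Walk u v) (hW : W.IsPath) :
    ∀ i j, i < j → j ≤ W.length → W.getVert i ≠ W.getVert j := by
  induction W with
  | nil => intro i j hij hj; simp at hj; omega
  | @cons a b c h W ih =>
    intro i j hij hj
    rw [Walk.cons_isPath_iff] at hW
    cases i with
    | zero =>
      rw [Walk.getVert_zero, Walk.getVert_cons _ _ (by omega)]
      intro hcon
      apply hW.2
      rw [Walk.mem_support_iff_exists_getVert]
      exact ⟨j - 1, hcon.symm, by simp at hj ⊢; omega⟩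
    | succ i =>
      rw [Walk.getVert_cons _ _ (by omega), Walk.getVert_cons _ _ (by omega)]
      apply ih hW.1
      · omega
      · simp at hj; omega

lemma tripod {V : Type*} {G : SimpleGraph V} (hT : G.IsTree) (p a b c : V)
    (hab : G.Adj a b) (hbc : G.Adj b c) (hac : a ≠ c) :
    G.dist p a = G.dist p b + 1 ∨ G.dist p c = G.dist p b + 1 := by
  classical
  have hconn := hT.isConnected
  obtain ⟨wa, hwa⟩ := hconn.exists_walk_length_eq_dist p a
  obtain ⟨wc, hwc⟩ := hconn.exists_walk_length_eq_dist p c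
  have habc : (Walk.cons hab (Walk.cons hbc Walk.nil)).IsPath := by
    simp [Walk.isPath_def, hab.ne, hbc.ne, hac]
  set W := wa.reverse.append wc with hWdef
  have hb : b ∈ W.support := by
    have huniq := hT.IsAcyclic.path_unique ⟨W.bypass, W.bypass_isPath⟩ ⟨_, habc⟩
    have hbsup : b ∈ W.bypass.support := by
      rw [show W.bypass = Walk.cons hab (Walk.cons hbc Walk.nil) from congrArg Subtype.val huniq]
      simp
    exact W.support_bypass_subset hbsup
  rw [Walk.mem_support_append_iff] at hb
  have hdab : G.dist b a = 1 := dist_eq_one_iff_adj.mpr hab.symm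
  have hdcb : G.dist b c = 1 := dist_eq_one_iff_adj.mpr hbc
  rcases hb with hb | hb
  · left
    rw [Walk.support_reverse, List.mem_reverse] at hb
    have h1 := dist_le (wa.takeUntil b hb)
    have h2 := dist_le (wa.dropUntil b hb)
    have h3 : (wa.takeUntil b hb).length + (wa.dropUntil b hb).length = wa.length := by
      rw [← Walk.length_append, Walk.take_spec]
    have htri := hconn.dist_triangle (u := p) (v := b) (w := a)
    omega
  · right
    have h1 := dist_le (wc.takeUntil b hb)
    have h2 := dist_le (wc.dropUntil b hb)
    have h3 : (wc.takeUntil b hb).length + (wc.dropUntil b hb).length = wc.length := by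
      rw [← Walk.length_append, Walk.take_spec]
    have htri := hconn.dist_triangle (u := p) (v := b) (w := c)
    omega

lemma seq_vshape (h : ℕ → ℤ) (k : ℕ)
    (h3 : ∀ t, t + 2 ≤ k → h t = h (t+1) + 1 ∨ h (t+2) = h (t+1) + 1) :
    ∀ i, i ≤ k → h i = h 0 - i ∨ h i = h k - k + i := by
  intro i hik
  by_cases hall : ∀ t < i, h t = h (t+1) + 1
  · left
    clear hik
    induction i with
    | zero => simp
    | succ n ihn =>
      have hn : h n = h 0 - n := ihn (fun t ht => hall t (by omega))
      have := hall n (by omega)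
      push_cast
      omega
  · rcases Nat.eq_or_lt_of_le hik with rfl | hik'
    · right; push_cast; ring_nf
    push_neg at hall
    obtain ⟨t, hti, htne⟩ := hall
    have hstep : h (t + 2) = h (t+1) + 1 := (h3 t (by omega)).resolve_left htne
    have hprop : ∀ s, t + 1 ≤ s → s + 1 ≤ k → h (s+1) = h s + 1 := by
      intro s hs
      induction s, hs using Nat.le_induction with
      | base => intro _; exact hstep
      | succ s hs ihs =>
        intro hsk
        have hps := ihs (by omega)
        rcases h3 s (by omega) with hc | hc
        · omega
        · exact hc
    have hup : ∀ s, i ≤ s → s ≤ k → h s = h i + (s - i : ℤ) := by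
      intro s hs
      induction s, hs using Nat.le_induction with
      | base => intro _; push_cast; ring_nf
      | succ s hs ihs =>
        intro hsk
        have := ihs (by omega)
        have := hprop s (by omega) (by omega)
        push_cast
        push_cast at this
        omega
    right
    have := hup k hik (le_refl k)
    omega

lemma conv_bound (h : ℕ → ℤ) (k i : ℕ) (hik : i ≤ k)
    (hd : h i = h 0 - i ∨ h i = h k - k + i)
    (e1 : h k ≤ h 0 + k) (e2 : h 0 ≤ h k + k) :
    (k : ℤ) * h i ≤ ((k : ℤ) - i) * h 0 + i * h k := by
  have hik' : (i:ℤ) ≤ k := by exact_mod_cast hik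
  have hi0 : (0:ℤ) ≤ i := Int.natCast_nonneg i
  rcases hd with hd | hd <;> nlinarith [mul_le_mul_of_nonneg_left e2 hi0,
    mul_le_mul_of_nonneg_left e1 (sub_nonneg.mpr hik')]









lemma median_on_path {V : Type*} {G : SimpleGraph V} (hT : G.IsTree)
    {u w : V} (W : G.Walk u w) (hW : W.IsPath) (pj : V) (i : ℕ) (hik : i ≤ W.length) :
    (W.length : ℤ) * (G.dist pj (W.getVert i) : ℤ) ≤
      ((W.length : ℤ) - i) * (G.dist pj u : ℤ) + (i : ℤ) * (G.dist pj w : ℤ) := by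
  set k := W.length with hk
  set h : ℕ → ℤ := fun t => (G.dist pj (W.getVert t) : ℤ) with hdef
  have h3 : ∀ t, t + 2 ≤ k → h t = h (t+1) + 1 ∨ h (t+2) = h (t+1) + 1 := by
    intro t ht
    have := tripod hT pj (W.getVert t) (W.getVert (t+1)) (W.getVert (t+2))
      (W.adj_getVert_succ (by omega)) (W.adj_getVert_succ (by omega))
      (getVert_ne_of_isPath W hW t (t+2) (by omega) ht)
    simp only [hdef]
    omega
  have hd := seq_vshape h k h3 i hik
  have htri := hT.isConnected.dist_triangle (u := pj) (v := u) (w := w)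
  have htri2 := hT.isConnected.dist_triangle (u := pj) (v := w) (w := u)
  have hdk := dist_le W
  have hdk2 : G.dist w u ≤ k := by rw [dist_comm]; exact hdk
  have e1 : h k ≤ h 0 + k := by
    simp only [hdef, Walk.getVert_zero, hk, Walk.getVert_length]
    omega
  have e2 : h 0 ≤ h k + k := by
    simp only [hdef, Walk.getVert_zero, hk, Walk.getVert_length]
    omega
  have := conv_bound h k i hik hd e1 e2
  simp only [hdef, Walk.getVert_zero, hk, Walk.getVert_length] at this
  convert this using 2 <;> simp [hdef, hk]

lemma induce_reachable {V : Type*} {G : SimpleGraph V} {S : Set V} :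
    ∀ {x y : V} (W : G.Walk x y) (hx : x ∈ S) (hy : y ∈ S),
      (∀ v ∈ W.support, v ∈ S) →
      (G.induce S).Reachable ⟨x, hx⟩ ⟨y, hy⟩ := by
  intro x y W
  induction W with
  | nil => intro hx hy _; rfl
  | @cons a b c hadj W ih =>
    intro hx hy hmem
    have hb : b ∈ S := hmem b (by simp)
    have hstep : (G.induce S).Adj ⟨a, hx⟩ ⟨b, hb⟩ := by
      simp [comap_adj, hadj]
    exact hstep.reachable.trans (ih hb hy (fun v hv => hmem v (by simp [hv])))

/-- The set of medians of an uncertain point on a tree induces a connected subtree. -/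
theorem medians_induce_connected {V : Type*} [Fintype V] (G : SimpleGraph V)
    (hT : G.IsTree) {m : ℕ} (p : Fin m → V) (f : Fin m → ℝ)
    (hf : ∀ j, 0 ≤ f j) (hsum : ∑ j, f j = 1) :
    (G.induce {v : V | ∀ u : V,
        ∑ j, f j * (G.dist (p j) v : ℝ) ≤ ∑ j, f j * (G.dist (p j) u : ℝ)}).Connected := by
  classical
  have hconn := hT.isConnected
  have hne : Nonempty V := hconn.nonempty
  set D : V → ℝ := fun v => ∑ j, f j * (G.dist (p j) v : ℝ) with hD
  set M : Set V := {v : V | ∀ u : V, D v ≤ D u} with hM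
  show (G.induce M).Connected
  -- M is nonempty
  obtain ⟨v0, -, hv0⟩ := Finset.exists_min_image Finset.univ D
    ⟨Classical.arbitrary V, Finset.mem_univ _⟩
  have hv0M : v0 ∈ M := fun u => hv0 u (Finset.mem_univ u)
  -- key claim: path vertices between medians are medians
  have key : ∀ (x y : V), x ∈ M → y ∈ M → ∀ (W : G.Walk x y), W.IsPath →
      ∀ v ∈ W.support, v ∈ M := by
    intro x y hx hy W hWp v hv
    obtain ⟨i, hvi, hik⟩ := Walk.mem_support_iff_exists_getVert.mp hv
    subst hvi
    set k := W.length with hk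
    rcases Nat.eq_zero_or_pos k with hk0 | hkpos
    · have : i = 0 := by omega
      subst this
      rw [Walk.getVert_zero]; exact hx
    intro t
    have hDineq : (k : ℝ) * D (W.getVert i) ≤ ((k : ℝ) - i) * D x + (i : ℝ) * D y := by
      simp only [hD, Finset.mul_sum, ← Finset.sum_add_distrib]
      apply Finset.sum_le_sum
      intro j _
      have hz := median_on_path hT W hWp (p j) i hik
      have hzr : (k : ℝ) * (G.dist (p j) (W.getVert i) : ℝ) ≤
          ((k : ℝ) - i) * (G.dist (p j) x : ℝ) + (i : ℝ) * (G.dist (p j) y : ℝ) := by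
        exact_mod_cast hz
      have := mul_le_mul_of_nonneg_left hzr (hf j)
      nlinarith [this]
    have hxt : D x ≤ D t := hx t
    have hyt : D y ≤ D t := hy t
    have hki : (0:ℝ) ≤ (k : ℝ) - i := by
      have : (i:ℝ) ≤ k := by exact_mod_cast hik
      linarith
    have hkr : (0:ℝ) < (k:ℝ) := by exact_mod_cast hkpos
    have hir : (0:ℝ) ≤ (i:ℝ) := by positivity
    nlinarith [hDineq]
  have hMne : Nonempty ↥M := ⟨⟨v0, hv0M⟩⟩
  refine ⟨?_⟩
  rintro ⟨x, hx⟩ ⟨y, hy⟩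
  obtain ⟨W0⟩ := hconn x y
  exact induce_reachable W0.bypass hx hy
    (fun v hv => key x y hx hy W0.bypass W0.bypass_isPath v hv)
end

section
/- If some point simultaneously minimizes one of the functions and dominates all functions except possibly one, then the optimal two-center objective equals the maximum of the individual minima: let X be a finite nonempty type and g_1,…,g_n : X → ℝ (n ≥ 1). Suppose there exist indices i₀, j₀ and a point x ∈ X such that x minimizes g_{i₀} over X (g_{i₀}(x) ≤ g_{i₀}(y) for all y) and g_i(x) ≤ g_{i₀}(x) for every index i ≠ j₀. Then min over pairs (a, b) ∈ X × X of φ(a,b) = max_i min(g_i(a), g_i(b)) equals max_i (min over y ∈ X of g_i(y)). -/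
/-- If some point `x` minimizes one of the functions and dominates all functions except
possibly one, then the optimal two-center objective equals the maximum of the individual
minima. -/
theorem two_center_eq_max_of_min {X : Type*} [Fintype X] [Nonempty X]
    {ι : Type*} [Fintype ι] [Nonempty ι] (g : ι → X → ℝ)
    (i₀ j₀ : ι) (x : X)
    (hmin : ∀ y : X, g i₀ x ≤ g i₀ y)
    (hdom : ∀ i : ι, i ≠ j₀ → g i x ≤ g i₀ x) :
    Finset.univ.inf' Finset.univ_nonempty
        (fun ab : X × X =>
          Finset.univ.sup' Finset.univ_nonempty
            (fun i => min (g i ab.1) (g i ab.2))) =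
      Finset.univ.sup' Finset.univ_nonempty
        (fun i => Finset.univ.inf' Finset.univ_nonempty (fun y : X => g i y)) := by
  apply le_antisymm
  · -- pick y₀ minimizing g j₀
    obtain ⟨y₀, -, hy₀⟩ := Finset.exists_mem_eq_inf' (Finset.univ_nonempty (α := X))
      (fun y : X => g j₀ y)
    refine le_trans (Finset.inf'_le _ (Finset.mem_univ (x, y₀))) ?_
    apply Finset.sup'_le
    intro i _
    by_cases hij : i = j₀
    · subst hij
      refine le_trans (min_le_right _ _) ?_
      refine Finset.le_sup' _ (Finset.mem_univ i) |>.trans' ?_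
      simp [← hy₀]
    · refine le_trans (min_le_left _ _) ?_
      refine le_trans (hdom i hij) ?_
      refine le_trans ?_ (Finset.le_sup' _ (Finset.mem_univ i₀))
      exact Finset.le_inf' _ _ (fun y _ => hmin y)
  · apply Finset.le_inf'
    rintro ⟨a, b⟩ -
    apply Finset.sup'_le
    intro i _
    refine le_trans ?_ (Finset.le_sup' _ (Finset.mem_univ i))
    exact le_min (Finset.inf'_le _ (Finset.mem_univ a)) (Finset.inf'_le _ (Finset.mem_univ b))
end
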